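/- arXiv:0909.0141 — 2 statements merged into one kernel-verified Lean document; each statement's English description precedes it below -/
import Mathlib

section
/- Let n ≥ 4 and let T be a d-equidistant ultrametric n-tree all of whose edge weights are nonnegative integers, with total weight D. For each j ∈ {1,…,n−2} and edge e of T let a_j(e) ∈ ℂ be arbitrary complex numbers, set x_i^{(j)} = Σ_e a_j(e)·t^{−h(e)} ∈ ℂ((t)) (sum over edges e on the path from the root to leaf i), and let M be the n×n matrix over ℂ((t)) whose rows are (1,…,1), (x_i^{(1)})_i, ((x_i^{(1)})²)_i, (x_i^{(2)})_i, …, (x_i^{(n−2)})_i. Then either det(M) = 0 or the t-adic valuation of det(M) is at least −D. -/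
open SimpleGraph

/-- A `d`-equidistant ultrametric `n`-tree with nonnegative integer edge weights:
a rooted binary tree whose `n` leaves are labeled by `Fin n`, with a nonnegative
integer weight on each edge, such that the path from the root to every leaf has
total weight `d`, and the path between any two distinct leaves has positive total
weight. -/
structure UltraTree (n : ℕ) where
  V : Type
  [fintypeV : Fintype V]
  [decEqV : DecidableEq V]
  G : SimpleGraph V
  [decAdj : DecidableRel G.Adj]
  isTree : G.IsTree
  root : V
  root_deg : G.degree root = 2
  deg_of_ne_root : ∀ v : V, v ≠ root → G.degree v = 3 ∨ G.degree v = 1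
  leaf : Fin n → V
  leaf_inj : Function.Injective leaf
  leaf_deg : ∀ i : Fin n, G.degree (leaf i) = 1
  leaf_surj : ∀ v : V, G.degree v = 1 → ∃ i : Fin n, leaf i = v
  d : ℤ
  weight : Sym2 V → ℤ
  weight_nonneg : ∀ e ∈ G.edgeSet, 0 ≤ weight e
  equidistant : ∀ i : Fin n, ∀ p : G.Walk root (leaf i), p.IsPath →
    (p.edges.map weight).sum = d
  leafpair_pos : ∀ i j : Fin n, i ≠ j →
    ∀ p : G.Walk (leaf i) (leaf j), p.IsPath → 0 < (p.edges.map weight).sum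

attribute [instance] UltraTree.fintypeV UltraTree.decEqV UltraTree.decAdj

/-- The unique path from the root to `v`. -/
noncomputable def rootPath {n : ℕ} (T : UltraTree n) (v : T.V) :
    T.G.Walk T.root v :=
  (T.isTree.existsUnique_path T.root v).exists.choose

/-- `depth T v` is the total weight of the (unique) path from the root to `v`. -/
noncomputable def depth {n : ℕ} (T : UltraTree n) (v : T.V) : ℤ :=
  ((rootPath T v).edges.map T.weight).sum

/-- For an edge `e`, `hEdge T e = d - depth u` where `u` is the endpoint of `e`
nearer the root (since the weights are nonnegative, this is the endpoint of
smaller depth). -/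
noncomputable def hEdge {n : ℕ} (T : UltraTree n) (e : Sym2 T.V) : ℤ :=
  T.d - Sym2.lift ⟨fun u w => min (depth T u) (depth T w),
    fun u w => by simp [min_comm]⟩ e

/-- `xval T a j i` is `x_i^{(j)} = Σ_e a_j(e) t^{-h(e)} ∈ ℂ((t))`, the sum running
over the edges `e` on the path from the root to leaf `i`. -/
noncomputable def xval {n : ℕ} (T : UltraTree n) (a : ℕ → Sym2 T.V → ℂ)
    (j : ℕ) (i : Fin n) : LaurentSeries ℂ :=
  ((rootPath T (T.leaf i)).edges.map
    (fun e => HahnSeries.single (-(hEdge T e)) (a j e))).sum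

/-- The matrix `M` whose rows are `(1,…,1)`, `(x_i^{(1)})_i`, `((x_i^{(1)})²)_i`,
`(x_i^{(2)})_i`, …, `(x_i^{(n-2)})_i`. -/
noncomputable def Mmat {n : ℕ} (T : UltraTree n) (a : ℕ → Sym2 T.V → ℂ) :
    Matrix (Fin n) (Fin n) (LaurentSeries ℂ) :=
  fun r c =>
    if r.val = 0 then 1
    else if r.val = 1 then xval T a 1 c
    else if r.val = 2 then (xval T a 1 c) ^ 2
    else xval T a (r.val - 1) c

/-!
Expanding each `x_i^{(j)}` and `(x_i^{(1)})²` into monomials, `det M` becomes a sum, over all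
choices of `n` edges (none for row `0`, two for row `2`, one for every other row), of
`t^{-Σ h(e)}` times a constant times `det B`, where row `r` of the `0/1` matrix `B` indicates
the leaves below all edges chosen for `r`. Suppose `det B ≠ 0` and fix an edge `e`. On the leaves
below `e`, the rows of `B` still span all functions, and a row none of whose edges lies strictly
below `e` is constant there (two edges on a common root path are comparable). Hence
`#(leaves below e) ≤ 1 + #(chosen edges strictly below e)`. Since `h(u) = d - Σ w(e)` over the
edges `e` strictly above `u`, and `n d = Σ_e w(e) · #(leaves below e)` by equidistance, summing
gives `Σ h ≤ Σ_e w(e) = D`.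
-/

open Finset

theorem Matrix.det_of_sum_rows {R ι : Type*} [CommRing R] [Fintype ι] [DecidableEq ι]
    {κ : ι → Type*} [∀ i, Fintype (κ i)] (f : ∀ i, κ i → ι → R) :
    (Matrix.of fun i j => ∑ k, f i k j).det =
      ∑ g : ∀ i, κ i, (Matrix.of fun i j => f i (g i) j).det := by
  have : (Matrix.of fun i j => ∑ k, f i k j) = fun i => ∑ k, f i k := by
    ext i j; simp
  rw [this]
  exact (Matrix.detRowAlternating : (ι → R) [⋀^ι]→ₗ[R] R).toMultilinearMap.map_sum f

/-- Restricted to the columns in `Q`, the rows of `B` still span `K^Q`, and every row outside `s`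
lies on the line of the constant function. -/
theorem Matrix.card_le_card_add_one_of_det_ne_zero {K ι : Type*} [Field K] [Fintype ι]
    [DecidableEq ι] {B : Matrix ι ι K} (hB : B.det ≠ 0) (Q s : Finset ι)
    (hs : ∀ r ∉ s, ∃ x, ∀ c ∈ Q, B r c = x) : #Q ≤ #s + 1 := by
  classical
  let π : (ι → K) →ₗ[K] (Q → K) := LinearMap.funLeft K K (↑)
  let S : Finset (Q → K) := insert (fun _ => 1) (s.image fun r => π (B r))
  have hrows : Submodule.span K (Set.range B) = ⊤ :=
    (Matrix.linearIndependent_rows_of_det_ne_zero hB).span_eq_top_of_card_eq_finrank'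
      (Module.finrank_fintype_fun_eq_card K).symm
  have hS : Submodule.span K (S : Set (Q → K)) = ⊤ := by
    refine eq_top_iff.mpr ?_
    have : Submodule.span K (Set.range fun r => π (B r)) = ⊤ := by
      rw [Set.range_comp' π B, Submodule.span_image, hrows, Submodule.map_top,
        LinearMap.range_eq_top]
      exact LinearMap.funLeft_surjective_of_injective K K _ Subtype.val_injective
    rw [← this, Submodule.span_le, Set.range_subset_iff]
    intro r
    by_cases hr : r ∈ s
    · exact Submodule.subset_span (mem_insert_of_mem (mem_image_of_mem _ hr))
    · obtain ⟨x, hx⟩ := hs r hr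
      have : π (B r) = x • fun _ => 1 := by
        ext c; simpa [π] using hx c c.2
      rw [this]
      exact Submodule.smul_mem _ _ (Submodule.subset_span (mem_insert_self _ _))
  calc #Q = Module.finrank K (Q → K) := by simp
    _ = Set.finrank K (S : Set (Q → K)) := by rw [Set.finrank, hS, finrank_top]
    _ ≤ #S := finrank_span_finset_le_card S
    _ ≤ #s + 1 := (card_insert_le _ _).trans (by gcongr; exact card_image_le)

theorem HahnSeries.prod_single {Γ R ι : Type*} [AddCommMonoid Γ] [PartialOrder Γ]
    [IsOrderedCancelAddMonoid Γ] [CommSemiring R] (s : Finset ι) (k : ι → Γ) (z : ι → R) :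
    ∏ i ∈ s, single (k i) (z i) = single (∑ i ∈ s, k i) (∏ i ∈ s, z i) := by
  classical
  induction s using Finset.induction_on with
  | empty => simp
  | insert i s hi ih =>
    rw [prod_insert hi, ih, single_mul_single, sum_insert hi, prod_insert hi]

theorem HahnSeries.eq_zero_or_le_order_of_le_orderTop {Γ R : Type*} [Zero Γ] [LinearOrder Γ]
    [Zero R] {x : HahnSeries Γ R} {g : Γ} (h : g ≤ x.orderTop) : x = 0 ∨ g ≤ x.order := by
  by_cases hx : x = 0
  · exact Or.inl hx
  · rw [← order_eq_orderTop_of_ne_zero hx, WithTop.coe_le_coe] at h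
    exact Or.inr h

namespace UltraTree

open SimpleGraph Walk Finset

variable {n : ℕ} (T : UltraTree n)

theorem rootPath_isPath (v : T.V) : (rootPath T v).IsPath :=
  (T.isTree.existsUnique_path T.root v).exists.choose_spec

theorem eq_rootPath {v : T.V} {p : T.G.Walk T.root v} (hp : p.IsPath) : p = rootPath T v :=
  (T.isTree.existsUnique_path T.root v).unique hp (T.rootPath_isPath v)

theorem sum_map_edges_rootPath {M : Type*} [AddCommMonoid M] (f : Sym2 T.V → M) (v : T.V) :
    ((rootPath T v).edges.map f).sum =
      ∑ e ∈ T.G.edgeFinset, if e ∈ (rootPath T v).edges then f e else 0 := by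
  rw [← List.sum_toFinset _ (T.rootPath_isPath v).edges_nodup, ← sum_filter]
  congr 1
  ext e
  simpa using fun h => (rootPath T v).edges_subset_edgeSet h

/-- The tree order `u ≤_T v` of the paper. -/
def IsAncestor (u v : T.V) : Prop := u ∈ (rootPath T v).support

variable {T}

theorem IsAncestor.rootPath_eq_takeUntil {u v : T.V} (h : T.IsAncestor u v) :
    rootPath T u = (rootPath T v).takeUntil u h :=
  (T.eq_rootPath ((T.rootPath_isPath v).takeUntil h)).symm

theorem IsAncestor.support_prefix {u v : T.V} (h : T.IsAncestor u v) :
    (rootPath T u).support <+: (rootPath T v).support := by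
  rw [h.rootPath_eq_takeUntil]
  conv_rhs => rw [← (rootPath T v).take_spec h, support_append]
  exact List.prefix_append _ _

theorem IsAncestor.edges_subset {u v : T.V} (h : T.IsAncestor u v) :
    (rootPath T u).edges ⊆ (rootPath T v).edges := by
  rw [h.rootPath_eq_takeUntil]
  exact edges_takeUntil_subset_edges _ h

theorem IsAncestor.refl (v : T.V) : T.IsAncestor v v := end_mem_support _

theorem IsAncestor.trans {u v w : T.V} (huv : T.IsAncestor u v) (hvw : T.IsAncestor v w) :
    T.IsAncestor u w :=
  hvw.support_prefix.subset huv

theorem IsAncestor.total {u w v : T.V} (hu : T.IsAncestor u v) (hw : T.IsAncestor w v) :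
    T.IsAncestor u w ∨ T.IsAncestor w u :=
  (List.prefix_or_prefix_of_prefix hu.support_prefix hw.support_prefix).imp
    (fun h => h.subset (IsAncestor.refl u)) (fun h => h.subset (IsAncestor.refl w))

theorem IsAncestor.antisymm {u v : T.V} (huv : T.IsAncestor u v) (hvu : T.IsAncestor v u) :
    u = v := by
  have h := huv.support_prefix.eq_of_length
    (huv.support_prefix.length_le.antisymm hvu.support_prefix.length_le)
  rw [← getLast_support (rootPath T u), ← getLast_support (rootPath T v)]
  simp only [h]

theorem rootPath_concat {x y : T.V} (h : T.G.Adj x y) (hyx : ¬ T.IsAncestor y x) :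
    rootPath T y = (rootPath T x).concat h :=
  (T.eq_rootPath ((T.rootPath_isPath x).concat hyx h)).symm

variable (T) in
theorem exists_rootPath_concat {e : Sym2 T.V} (he : e ∈ T.G.edgeSet) :
    ∃ x y, ∃ h : T.G.Adj x y, e = s(x, y) ∧ rootPath T y = (rootPath T x).concat h := by
  induction e using Sym2.ind with
  | _ x y =>
    have h : T.G.Adj x y := he
    by_cases hyx : T.IsAncestor y x
    · have hxy : ¬ T.IsAncestor x y := fun hxy => h.ne (hxy.antisymm hyx)
      exact ⟨y, x, h.symm, Sym2.eq_swap, rootPath_concat h.symm hxy⟩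
    · exact ⟨x, y, h, rfl, rootPath_concat h hyx⟩

theorem mem_edges_rootPath_iff {x y : T.V} {h : T.G.Adj x y}
    (hxy : rootPath T y = (rootPath T x).concat h) (v : T.V) :
    s(x, y) ∈ (rootPath T v).edges ↔ T.IsAncestor y v := by
  refine ⟨snd_mem_support_of_mem_edges _, fun hyv => hyv.edges_subset ?_⟩
  simp [hxy, edges_concat]

theorem depth_of_rootPath_concat {x y : T.V} {h : T.G.Adj x y}
    (hxy : rootPath T y = (rootPath T x).concat h) :
    depth T y = depth T x + T.weight s(x, y) := by
  simp [depth, hxy, edges_concat]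

theorem hEdge_of_rootPath_concat {x y : T.V} {h : T.G.Adj x y}
    (hxy : rootPath T y = (rootPath T x).concat h) :
    hEdge T s(x, y) = T.d - depth T x := by
  have hw := T.weight_nonneg s(x, y) h
  simp [hEdge, depth_of_rootPath_concat hxy, hw]

variable (T) in
/-- `e ∈ (rootPath T (T.upperEnd u)).edges` says that the edge `e` lies strictly above `u`. -/
noncomputable def upperEnd (e : Sym2 T.V) : T.V :=
  if h : ∃ x y, ∃ hxy : T.G.Adj x y, e = s(x, y) ∧ rootPath T y = (rootPath T x).concat hxy
  then h.choose else T.root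

theorem upperEnd_spec {e : Sym2 T.V} (he : e ∈ T.G.edgeSet) :
    ∃ y, ∃ h : T.G.Adj (T.upperEnd e) y,
      e = s(T.upperEnd e, y) ∧ rootPath T y = (rootPath T (T.upperEnd e)).concat h := by
  have hex := T.exists_rootPath_concat he
  rw [upperEnd, dif_pos hex]
  exact hex.choose_spec

theorem hEdge_eq_sub_depth_upperEnd {e : Sym2 T.V} (he : e ∈ T.G.edgeSet) :
    hEdge T e = T.d - depth T (T.upperEnd e) := by
  obtain ⟨y, h, he_eq, hy⟩ := upperEnd_spec he
  rw [← hEdge_of_rootPath_concat hy, ← he_eq]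

/-- If `e` and `u` lie on a common root path, then either `u` lies on every root path through
`e`, or `e` lies strictly above `u`. -/
theorem forall_mem_edges_or_mem_edges_upperEnd {e u : Sym2 T.V} (he : e ∈ T.G.edgeSet)
    (hu : u ∈ T.G.edgeSet) {c : T.V} (hec : e ∈ (rootPath T c).edges)
    (huc : u ∈ (rootPath T c).edges) :
    (∀ v, e ∈ (rootPath T v).edges → u ∈ (rootPath T v).edges) ∨
      e ∈ (rootPath T (T.upperEnd u)).edges := by
  obtain ⟨y, h, hu_eq, hy⟩ := upperEnd_spec hu
  generalize T.upperEnd u = x at h hu_eq hy ⊢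
  subst hu_eq
  obtain ⟨x', y', h', rfl, hy'⟩ := T.exists_rootPath_concat he
  simp only [mem_edges_rootPath_iff hy, mem_edges_rootPath_iff hy'] at huc hec ⊢
  by_cases hyy' : T.IsAncestor y y'
  · exact Or.inl fun v hv => hyy'.trans hv
  · right
    have hy'y : y' ∈ (rootPath T y).support := (hec.total huc).resolve_right hyy'
    rw [hy, support_concat, List.mem_append, List.mem_singleton] at hy'y
    exact hy'y.resolve_right fun h => hyy' (h ▸ IsAncestor.refl y)

variable (T) in
noncomputable def leavesBelow (e : Sym2 T.V) : Finset (Fin n) :=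
  {c | e ∈ (rootPath T (T.leaf c)).edges}

theorem sum_weight_mul_card_leavesBelow :
    ∑ e ∈ T.G.edgeFinset, T.weight e * #(T.leavesBelow e) = n * T.d := by
  have hleaf (c : Fin n) : depth T (T.leaf c) = T.d := T.equidistant c _ (T.rootPath_isPath _)
  calc ∑ e ∈ T.G.edgeFinset, T.weight e * #(T.leavesBelow e)
      = ∑ c, depth T (T.leaf c) := by
        simp only [depth, sum_map_edges_rootPath, leavesBelow]
        rw [sum_comm]
        simp [sum_ite, mul_comm]
    _ = n * T.d := by simp [hleaf]

variable (T) in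
noncomputable def leafMatrix {m : Fin n → ℕ} (G : ∀ r, Fin (m r) → T.G.edgeSet) :
    Matrix (Fin n) (Fin n) ℂ :=
  Matrix.of fun r c => if ∀ k, (G r k : Sym2 T.V) ∈ (rootPath T (T.leaf c)).edges then 1 else 0

theorem exists_leafMatrix_eq_of_forall_not_mem {m : Fin n → ℕ}
    (G : ∀ r, Fin (m r) → T.G.edgeSet) {e : Sym2 T.V} (he : e ∈ T.G.edgeSet) {r : Fin n}
    (hr : ∀ k, e ∉ (rootPath T (T.upperEnd (G r k))).edges) :
    ∃ x, ∀ c ∈ T.leavesBelow e, T.leafMatrix G r c = x := by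
  have hdich (k) : (∀ v, e ∈ (rootPath T v).edges → ↑(G r k) ∈ (rootPath T v).edges) ∨
      ∀ v, e ∈ (rootPath T v).edges → ↑(G r k) ∉ (rootPath T v).edges := by
    by_cases hex : ∃ v, e ∈ (rootPath T v).edges ∧ ↑(G r k) ∈ (rootPath T v).edges
    · obtain ⟨v, hev, hkv⟩ := hex
      exact Or.inl
        ((forall_mem_edges_or_mem_edges_upperEnd he (G r k).2 hev hkv).resolve_right (hr k))
    · exact Or.inr fun v hev hkv => hex ⟨v, hev, hkv⟩
  simp only [leavesBelow, mem_filter, mem_univ, true_and, leafMatrix, Matrix.of_apply]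
  by_cases hall : ∀ k v, e ∈ (rootPath T v).edges → ↑(G r k) ∈ (rootPath T v).edges
  · exact ⟨1, fun c hc => if_pos fun k => hall k _ hc⟩
  · obtain ⟨k, hk⟩ := not_forall.mp hall
    exact ⟨0, fun c hc => if_neg fun hall' => (hdich k).resolve_left hk _ hc (hall' k)⟩

theorem card_leavesBelow_le {m : Fin n → ℕ} {G : ∀ r, Fin (m r) → T.G.edgeSet}
    (hG : (T.leafMatrix G).det ≠ 0) {e : Sym2 T.V} (he : e ∈ T.G.edgeSet) :
    #(T.leavesBelow e) ≤ ∑ r, #{k | e ∈ (rootPath T (T.upperEnd (G r k))).edges} + 1 := by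
  let s : Finset (Fin n) := {r | ∃ k, e ∈ (rootPath T (T.upperEnd (G r k))).edges}
  have hs : #s ≤ ∑ r, #{k | e ∈ (rootPath T (T.upperEnd (G r k))).edges} := by
    rw [card_eq_sum_ones, sum_filter]
    refine sum_le_sum fun r _ => ?_
    split_ifs with h
    · obtain ⟨k, hk⟩ := h
      exact card_pos.mpr ⟨k, by simpa using hk⟩
    · exact Nat.zero_le _
  refine (Matrix.card_le_card_add_one_of_det_ne_zero hG _ s fun r hr => ?_).trans (by omega)
  exact exists_leafMatrix_eq_of_forall_not_mem G he fun k hk => hr (by simpa [s] using ⟨k, hk⟩)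

theorem sum_hEdge_le_sum_weight {m : Fin n → ℕ} (hm : ∑ r, m r = n)
    {G : ∀ r, Fin (m r) → T.G.edgeSet} (hG : (T.leafMatrix G).det ≠ 0) :
    ∑ r, ∑ k, hEdge T (G r k) ≤ ∑ e ∈ T.G.edgeFinset, T.weight e := by
  let N (e : Sym2 T.V) : ℕ := ∑ r, #{k | e ∈ (rootPath T (T.upperEnd (G r k))).edges}
  calc ∑ r, ∑ k, hEdge T (G r k)
      = ∑ r, ∑ k, (T.d - ∑ e ∈ T.G.edgeFinset,
          if e ∈ (rootPath T (T.upperEnd (G r k))).edges then T.weight e else 0) :=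
        sum_congr rfl fun r _ => sum_congr rfl fun k _ => by
          rw [hEdge_eq_sub_depth_upperEnd (G r k).2, depth, sum_map_edges_rootPath]
    _ = n * T.d - ∑ e ∈ T.G.edgeFinset, T.weight e * N e := by
        simp only [sum_sub_distrib]
        rw [sum_congr rfl fun r _ => sum_comm, sum_comm]
        congr 1
        · simp [← sum_mul, ← Nat.cast_sum, hm]
        · simp [sum_ite, mul_sum, mul_comm, N]
    _ = ∑ e ∈ T.G.edgeFinset, T.weight e * (#(T.leavesBelow e) - N e) := by
        rw [← sum_weight_mul_card_leavesBelow, ← sum_sub_distrib]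
        simp only [mul_sub]
    _ ≤ ∑ e ∈ T.G.edgeFinset, T.weight e * 1 := by
        refine sum_le_sum fun e he => mul_le_mul_of_nonneg_left ?_
          (T.weight_nonneg e (mem_edgeFinset.mp he))
        have := card_leavesBelow_le hG (mem_edgeFinset.mp he)
        dsimp only [N]
        omega
    _ = _ := by simp

end UltraTree

open HahnSeries

def Mmat.rowDegree {n : ℕ} (r : Fin n) : ℕ :=
  if r.val = 0 then 0 else if r.val = 2 then 2 else 1

def Mmat.rowIndex {n : ℕ} (r : Fin n) : ℕ := if r.val ≤ 2 then 1 else r.val - 1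

theorem Mmat_apply_eq_pow {n : ℕ} (T : UltraTree n) (a : ℕ → Sym2 T.V → ℂ) (r c : Fin n) :
    Mmat T a r c = xval T a (Mmat.rowIndex r) c ^ Mmat.rowDegree r := by
  unfold Mmat Mmat.rowIndex Mmat.rowDegree
  split_ifs <;> first | rfl | (exfalso; omega) | simp

theorem Mmat.sum_rowDegree {n : ℕ} (hn : 3 ≤ n) : ∑ r : Fin n, rowDegree r = n := by
  obtain ⟨k, rfl⟩ := Nat.exists_eq_add_of_le' hn
  simp [Fin.sum_univ_succ, rowDegree]
  omega

namespace UltraTree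

variable {n : ℕ} (T : UltraTree n)

theorem xval_eq_sum (a : ℕ → Sym2 T.V → ℂ) (j : ℕ) (c : Fin n) :
    xval T a j c = ∑ e : T.G.edgeSet,
      if ↑e ∈ (rootPath T (T.leaf c)).edges then single (-hEdge T e) (a j e) else 0 := by
  rw [xval, sum_map_edges_rootPath]
  exact sum_subtype _ (fun _ => mem_edgeFinset) _

theorem xval_pow_eq_sum (a : ℕ → Sym2 T.V → ℂ) (j m : ℕ) (c : Fin n) :
    xval T a j c ^ m = ∑ g : Fin m → T.G.edgeSet,
      single (-∑ k, hEdge T (g k)) (∏ k, a j (g k)) *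
        C (if ∀ k, ↑(g k) ∈ (rootPath T (T.leaf c)).edges then 1 else 0) := by
  rw [xval_eq_sum, ← Fin.prod_const, Fintype.prod_sum]
  refine sum_congr rfl fun g _ => ?_
  rw [Fintype.prod_ite_zero]
  split_ifs <;> simp [prod_single]

theorem det_Mmat_eq_sum (a : ℕ → Sym2 T.V → ℂ) :
    (Mmat T a).det = ∑ G : ∀ r : Fin n, Fin (Mmat.rowDegree r) → T.G.edgeSet,
      single (-∑ r, ∑ k, hEdge T (G r k))
        ((∏ r, ∏ k, a (Mmat.rowIndex r) (G r k)) * (T.leafMatrix G).det) := by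
  have hM : Mmat T a = Matrix.of fun r c => ∑ g : Fin (Mmat.rowDegree r) → T.G.edgeSet,
      single (-∑ k, hEdge T (g k)) (∏ k, a (Mmat.rowIndex r) (g k)) *
        C (if ∀ k, ↑(g k) ∈ (rootPath T (T.leaf c)).edges then 1 else 0) := by
    ext r c
    rw [Mmat_apply_eq_pow, xval_pow_eq_sum, Matrix.of_apply]
  rw [hM, Matrix.det_of_sum_rows]
  refine sum_congr rfl fun G _ => ?_
  refine (Matrix.det_mul_column (fun r => single (-∑ k, hEdge T (G r k))
      (∏ k, a (Mmat.rowIndex r) (G r k))) (C.mapMatrix (T.leafMatrix G))).trans ?_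
  rw [← RingHom.map_det, prod_single, C_apply, single_mul_single, add_zero, sum_neg_distrib]

end UltraTree

/-- for `n ≥ 4` and a `d`-equidistant ultrametric `n`-tree `T` with
nonnegative integer edge weights and total weight `D`, for every assignment of
complex values to the `a_j(e)`, either `det M = 0` or the `t`-adic valuation of
`det M` is at least `-D`. -/
theorem stmt1 (n : ℕ) (hn : 4 ≤ n) (T : UltraTree n)
    (D : ℤ) (hD : D = ∑ e ∈ T.G.edgeFinset, T.weight e)
    (a : ℕ → Sym2 T.V → ℂ) :
    (Mmat T a).det = 0 ∨ -D ≤ (Mmat T a).det.order := by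
  refine HahnSeries.eq_zero_or_le_order_of_le_orderTop ?_
  rw [T.det_Mmat_eq_sum, ← HahnSeries.addVal_apply]
  refine AddValuation.map_le_sum _ fun G _ => ?_
  by_cases hG : (T.leafMatrix G).det = 0
  · simp [hG]
  · have hK := UltraTree.sum_hEdge_le_sum_weight (Mmat.sum_rowDegree (by omega)) hG
    exact (WithTop.coe_le_coe.mpr (by omega)).trans HahnSeries.orderTop_single_le
end

section
/- Let T be a rooted binary tree with n ≥ 2 leaves, let v_1, v_2, …, v_{n−1} be an enumeration of its internal vertices such that v_i ≤_T v_j implies j ≤ i (so v_{n−1} is the root), and let α be an injective map from the internal vertices to the leaves with v_i ≤_T α(v_i) for all i; write a_i = α(v_i). Then for every i with 1 ≤ i ≤ n−1 there exists a unique leaf b_i such that v_i ≤_T b_i and b_i ∉ {a_1, a_2, …, a_i}. -/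
open SimpleGraph

/-- A rooted binary tree with `n` leaves labeled by `Fin n`: a finite tree with a
distinguished root of degree 2, all of whose non-root vertices have degree 3
(internal vertices) or degree 1 (leaves), whose leaves are labeled bijectively
by `Fin n`. -/
structure RootedBinaryTree (n : ℕ) where
  V : Type
  [fintypeV : Fintype V]
  [decEqV : DecidableEq V]
  G : SimpleGraph V
  [decAdj : DecidableRel G.Adj]
  isTree : G.IsTree
  root : V
  root_deg : G.degree root = 2
  deg_of_ne_root : ∀ v : V, v ≠ root → G.degree v = 3 ∨ G.degree v = 1
  leaf : Fin n → V
  leaf_inj : Function.Injective leaf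
  leaf_deg : ∀ i : Fin n, G.degree (leaf i) = 1
  leaf_surj : ∀ v : V, G.degree v = 1 → ∃ i : Fin n, leaf i = v

attribute [instance] RootedBinaryTree.fintypeV RootedBinaryTree.decEqV
  RootedBinaryTree.decAdj

/-- The tree order on `T`: `v ≤_T w` iff `v` lies on the (unique) path from the
root to `w`. -/
def treeLE {n : ℕ} (T : RootedBinaryTree n) (v w : T.V) : Prop :=
  ∀ p : T.G.Walk T.root w, p.IsPath → v ∈ p.support

/-- A vertex is internal iff it is the root or has degree 3. -/
def isInternal {n : ℕ} (T : RootedBinaryTree n) (v : T.V) : Prop :=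
  v = T.root ∨ T.G.degree v = 3

/-!
Below any vertex `w`, every descendant other than `w` is the child of exactly one descendant,
internal vertices have two children and leaves none; so the subtree below `w` has one more leaf
than internal vertices. The internal vertices below `v i` are the `v j` with `v i ≤_T v j`, all
with `j ≤ i`, and their images `a j` are distinct leaves below `v i`: exactly one leaf below
`v i` is left over. It avoids every `a j` with `j ≤ i`, because if `a j` lies below `v i` then
`v i` and `v j` are comparable (both lie on the root path of `a j`), which forces `v i ≤_T v j`.
-/

namespace RootedBinaryTree

open Finset Walk

variable {n : ℕ} (T : RootedBinaryTree n)

noncomputable def rootPath (w : T.V) : T.G.Walk T.root w :=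
  (T.isTree.existsUnique_path T.root w).choose

lemma rootPath_isPath (w : T.V) : (T.rootPath w).IsPath :=
  (T.isTree.existsUnique_path T.root w).choose_spec.1

lemma eq_rootPath {w : T.V} {p : T.G.Walk T.root w} (hp : p.IsPath) : p = T.rootPath w :=
  (T.isTree.existsUnique_path T.root w).choose_spec.2 p hp

variable {T}

lemma treeLE_iff_mem_support {u w : T.V} : treeLE T u w ↔ u ∈ (T.rootPath w).support :=
  ⟨fun h => h _ (T.rootPath_isPath w), fun h _ hp => eq_rootPath T hp ▸ h⟩

lemma treeLE_iff_prefix {u w : T.V} :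
    treeLE T u w ↔ (T.rootPath u).support <+: (T.rootPath w).support := by
  refine ⟨fun h => ?_, fun h => treeLE_iff_mem_support.2 (h.subset (end_mem_support _))⟩
  have hu := treeLE_iff_mem_support.1 h
  rw [← (T.rootPath w).take_spec hu, support_append,
    eq_rootPath T ((T.rootPath_isPath w).takeUntil hu)]
  exact List.prefix_append _ _

lemma treeLE_refl (u : T.V) : treeLE T u u :=
  treeLE_iff_prefix.2 (List.prefix_refl _)

lemma treeLE_trans {u v w : T.V} (huv : treeLE T u v) (hvw : treeLE T v w) : treeLE T u w :=
  treeLE_iff_prefix.2 ((treeLE_iff_prefix.1 huv).trans (treeLE_iff_prefix.1 hvw))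

lemma treeLE_antisymm {u w : T.V} (huw : treeLE T u w) (hwu : treeLE T w u) : u = w := by
  have huw' := treeLE_iff_prefix.1 huw
  have h := huw'.eq_of_length ((treeLE_iff_prefix.1 hwu).length_le.antisymm' huw'.length_le)
  rw [← (T.rootPath u).getLast_support, ← (T.rootPath w).getLast_support]
  simp only [h]

lemma treeLE_total_of_treeLE {u v w : T.V} (huw : treeLE T u w) (hvw : treeLE T v w) :
    treeLE T u v ∨ treeLE T v u := by
  simp only [treeLE_iff_prefix] at *
  exact List.prefix_or_prefix_of_prefix huw hvw

lemma root_treeLE (u : T.V) : treeLE T T.root u :=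
  treeLE_iff_mem_support.2 (start_mem_support _)

lemma eq_root_of_treeLE_root {u : T.V} (h : treeLE T u T.root) : u = T.root :=
  treeLE_antisymm h (root_treeLE u)

lemma treeLE_or_treeLE_of_adj {u z : T.V} (h : T.G.Adj u z) : treeLE T u z ∨ treeLE T z u := by
  simp only [treeLE_iff_mem_support]
  by_contra! hc
  exact hc.2 (T.isTree.isAcyclic.mem_support_of_ne_mem_support_of_adj_of_isPath
    (T.rootPath_isPath u) (T.rootPath_isPath z) h hc.1)

lemma rootPath_eq_concat {u z : T.V} (h : T.G.Adj u z) (huz : treeLE T u z) :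
    T.rootPath z = (T.rootPath u).concat h :=
  T.isTree.isAcyclic.path_concat (T.rootPath_isPath u) (T.rootPath_isPath z) h
    (treeLE_iff_mem_support.1 huz)

variable (T) in
noncomputable def parent (w : T.V) : T.V := (T.rootPath w).penultimate

lemma parent_eq_of_adj {u z : T.V} (h : T.G.Adj u z) (huz : treeLE T u z) : T.parent z = u := by
  rw [parent, rootPath_eq_concat h huz, penultimate_concat]

lemma adj_parent {w : T.V} (hw : w ≠ T.root) : T.G.Adj (T.parent w) w :=
  adj_penultimate (not_nil_of_ne hw.symm)

lemma parent_treeLE (w : T.V) : treeLE T (T.parent w) w :=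
  treeLE_iff_mem_support.2 (getVert_mem_support _ _)

lemma treeLE_parent {u w : T.V} (huw : treeLE T u w) (hne : u ≠ w) : treeLE T u (T.parent w) := by
  have hw : w ≠ T.root := by rintro rfl; exact hne (eq_root_of_treeLE_root huw)
  rw [treeLE_iff_mem_support, rootPath_eq_concat (adj_parent hw) (parent_treeLE w),
    support_concat] at huw
  simpa [hne, treeLE_iff_mem_support] using huw

open scoped Classical in
variable (T) in
noncomputable def children (u : T.V) : Finset T.V :=
  (T.G.neighborFinset u).filter (treeLE T u)

lemma mem_children {u z : T.V} : z ∈ T.children u ↔ T.G.Adj u z ∧ treeLE T u z := by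
  simp [children]

lemma card_children_add_one {u : T.V} (hu : u ≠ T.root) :
    #(T.children u) + 1 = T.G.degree u := by
  classical
  have hparent : (T.G.neighborFinset u).filter (¬ treeLE T u ·) = {T.parent u} := by
    ext z
    simp only [mem_filter, mem_neighborFinset, mem_singleton]
    constructor
    · rintro ⟨h, hnot⟩
      exact (parent_eq_of_adj h.symm ((treeLE_or_treeLE_of_adj h).resolve_left hnot)).symm
    · rintro rfl
      exact ⟨(adj_parent hu).symm, fun h =>
        (adj_parent hu).ne (treeLE_antisymm (parent_treeLE u) h)⟩
  rw [← card_neighborFinset_eq_degree,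
    ← card_filter_add_card_filter_not (s := T.G.neighborFinset u) (treeLE T u), hparent,
    card_singleton]
  rfl

lemma card_children_root : #(T.children T.root) = 2 := by
  classical
  rw [children, filter_true_of_mem fun z _ => root_treeLE z, card_neighborFinset_eq_degree,
    T.root_deg]

lemma not_isInternal_iff_degree_eq_one {u : T.V} : ¬ isInternal T u ↔ T.G.degree u = 1 := by
  unfold isInternal
  constructor
  · intro h
    simp only [not_or] at h
    exact (T.deg_of_ne_root u h.1).resolve_left h.2
  · rintro h (rfl | h3) <;> simp_all [T.root_deg]

lemma card_children_of_isInternal {u : T.V} (hu : isInternal T u) : #(T.children u) = 2 := by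
  rcases hu with rfl | h3
  · exact card_children_root
  · have hu : u ≠ T.root := by rintro rfl; simp [T.root_deg] at h3
    have := card_children_add_one hu
    omega

lemma card_children_of_not_isInternal {u : T.V} (hu : ¬ isInternal T u) :
    #(T.children u) = 0 := by
  have h1 := not_isInternal_iff_degree_eq_one.1 hu
  have hu : u ≠ T.root := by rintro rfl; simp [T.root_deg] at h1
  have := card_children_add_one hu
  omega

open scoped Classical in
variable (T) in
noncomputable def descendants (w : T.V) : Finset T.V := univ.filter (treeLE T w)

lemma mem_descendants {w u : T.V} : u ∈ T.descendants w ↔ treeLE T w u := by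
  simp [descendants]

lemma card_descendants_eq_sum_card_children (w : T.V) :
    #(T.descendants w) = ∑ u ∈ T.descendants w, #(T.children u) + 1 := by
  have hw : w ∈ T.descendants w := mem_descendants.2 (treeLE_refl w)
  have hmaps : Set.MapsTo T.parent ((T.descendants w).erase w) (T.descendants w) := by
    intro z hz
    obtain ⟨hne, hz⟩ := mem_erase.1 hz
    exact mem_descendants.2 (treeLE_parent (mem_descendants.1 hz) hne.symm)
  have hfiber : ∀ u ∈ T.descendants w,
      ((T.descendants w).erase w).filter (T.parent · = u) = T.children u := by
    intro u hu
    rw [mem_descendants] at hu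
    ext z
    simp only [mem_filter, mem_erase, mem_descendants, mem_children]
    constructor
    · rintro ⟨⟨hne, hwz⟩, rfl⟩
      have hz : z ≠ T.root := by rintro rfl; exact hne (eq_root_of_treeLE_root hwz).symm
      exact ⟨adj_parent hz, parent_treeLE z⟩
    · rintro ⟨hadj, huz⟩
      refine ⟨⟨?_, treeLE_trans hu huz⟩, parent_eq_of_adj hadj huz⟩
      rintro rfl
      exact hadj.ne (treeLE_antisymm huz hu)
  rw [← card_erase_add_one hw, card_eq_sum_card_fiberwise hmaps,
    sum_congr rfl fun u hu => congrArg card (hfiber u hu)]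

open scoped Classical in
lemma card_descendants_eq_two_mul_add_one (w : T.V) :
    #(T.descendants w) = 2 * #((T.descendants w).filter (isInternal T)) + 1 := by
  rw [card_descendants_eq_sum_card_children, card_eq_sum_ones, sum_filter, mul_sum]
  congr 1
  refine sum_congr rfl fun u _ => ?_
  by_cases hu : isInternal T u
  · simp [hu, card_children_of_isInternal hu]
  · simp [hu, card_children_of_not_isInternal hu]

open scoped Classical in
lemma card_leaves_below_eq_card_internal_add_one (w : T.V) :
    #(univ.filter fun b => treeLE T w (T.leaf b))
      = #((T.descendants w).filter (isInternal T)) + 1 := by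
  have hleaves : #(univ.filter fun b => treeLE T w (T.leaf b))
      = #((T.descendants w).filter (¬ isInternal T ·)) := by
    refine card_nbij T.leaf (fun b hb => ?_) T.leaf_inj.injOn (fun u hu => ?_)
    · simp_all [mem_descendants, not_isInternal_iff_degree_eq_one, T.leaf_deg]
    · simp only [coe_filter, mem_descendants, not_isInternal_iff_degree_eq_one] at hu
      obtain ⟨b, rfl⟩ := T.leaf_surj u hu.2
      exact ⟨b, by simpa using hu.1, rfl⟩
  have := card_filter_add_card_filter_not (s := T.descendants w) (isInternal T)
  have := card_descendants_eq_two_mul_add_one w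
  omega

open scoped Classical in
lemma card_internal_descendants_eq {ι : Type*} [Fintype ι] {v : ι → T.V}
    (hv_int : ∀ i, isInternal T (v i)) (hv_inj : Function.Injective v)
    (hv_surj : ∀ w, isInternal T w → ∃ i, v i = w) (w : T.V) :
    #((T.descendants w).filter (isInternal T)) = #(univ.filter fun i => treeLE T w (v i)) := by
  refine (card_nbij v (fun i hi => ?_) hv_inj.injOn fun u hu => ?_).symm
  · simp only [mem_coe, mem_filter, mem_univ, true_and, mem_descendants] at hi ⊢
    exact ⟨hi, hv_int i⟩
  · simp only [mem_coe, mem_filter, mem_descendants] at hu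
    obtain ⟨i, rfl⟩ := hv_surj _ hu.2
    exact ⟨i, by simpa using hu.1, rfl⟩

end RootedBinaryTree

open Finset RootedBinaryTree in
theorem stmt3_general (n : ℕ) (T : RootedBinaryTree n)
    (v : Fin (n - 1) → T.V)
    (hv_int : ∀ i, isInternal T (v i))
    (hv_inj : Function.Injective v)
    (hv_surj : ∀ w : T.V, isInternal T w → ∃ i, v i = w)
    (hv_order : ∀ i j : Fin (n - 1), treeLE T (v i) (v j) → j ≤ i)
    (a : Fin (n - 1) → Fin n)
    (ha_inj : Function.Injective a)
    (ha_below : ∀ i, treeLE T (v i) (T.leaf (a i))) :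
    ∀ i : Fin (n - 1), ∃! b : Fin n,
      treeLE T (v i) (T.leaf b) ∧ ∀ j : Fin (n - 1), j ≤ i → b ≠ a j := by
  classical
  intro i
  set S := univ.filter fun b => treeLE T (v i) (T.leaf b)
  set J := univ.filter fun j => treeLE T (v i) (v j)
  have hcard : #S = #J + 1 := by
    rw [card_leaves_below_eq_card_internal_add_one,
      card_internal_descendants_eq hv_int hv_inj hv_surj]
  have hmaps : Set.MapsTo a J S := fun j hj => by
    simp only [S, J, mem_coe, mem_filter, mem_univ, true_and] at hj ⊢
    exact treeLE_trans hj (ha_below j)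
  refine (existsUnique_congr fun b => ?_).1
    (existsUnique_notMem_image_of_injOn_of_card_eq_add_one ha_inj.injOn hmaps hcard)
  simp only [S, J, mem_filter, mem_univ, true_and, mem_image, not_exists, not_and]
  refine and_congr_right fun hb =>
    ⟨fun h j hji hbj => h j ?_ hbj.symm, fun h j hj hbj => h j (hv_order i j hj) hbj.symm⟩
  rcases treeLE_total_of_treeLE hb (hbj ▸ ha_below j) with hle | hge
  · exact hle
  · exact le_antisymm hji (hv_order j i hge) ▸ treeLE_refl _

/-- given an enumeration `v 0, …, v (n-2)` of the internal vertices
(`v i ≤_T v j` implying `j ≤ i`) and an injective map `α` from internal vertices to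
leaves with `v i ≤_T a i := α (v i)`, for every `i` there is a unique leaf `b`
with `v i ≤_T b` and `b ∉ {a 0, …, a i}`. -/
theorem stmt3 (n : ℕ) (hn : 2 ≤ n) (T : RootedBinaryTree n)
    (v : Fin (n - 1) → T.V)
    (hv_int : ∀ i, isInternal T (v i))
    (hv_inj : Function.Injective v)
    (hv_surj : ∀ w : T.V, isInternal T w → ∃ i, v i = w)
    (hv_order : ∀ i j : Fin (n - 1), treeLE T (v i) (v j) → j ≤ i)
    (a : Fin (n - 1) → Fin n)
    (ha_inj : Function.Injective a)
    (ha_below : ∀ i, treeLE T (v i) (T.leaf (a i))) :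
    ∀ i : Fin (n - 1), ∃! b : Fin n,
      treeLE T (v i) (T.leaf b) ∧ ∀ j : Fin (n - 1), j ≤ i → b ≠ a j :=
  stmt3_general n T v hv_int hv_inj hv_surj hv_order a ha_inj ha_below
end
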